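/- Let α: M₀ → M₀ ⊗ Q₀ be the restriction of a coaction to the spectral subalgebra, with M^π := (id ⊗ ρ^π)α(M) the spectral subspace of type π. Choose a basis {e_{πi1}} of M_{π1} := E^π_{11}(M) and set e_{πis} := E^π_{s1}(e_{πi1}). Then α(e_{πis}) = Σ_{j=1}^{d_π} e_{πij} ⊗ q^π_{js}; in particular α(M₀) ⊆ M₀ ⊗_{alg} Q₀. -/
import Mathlib


open TensorProduct

noncomputable section

namespace CocycleTwist

variable (A : Type) [Ring A] [HopfAlgebra ℂ A]

/-- Convolution product of two linear maps from a coalgebra into an algebra. -/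
def conv {C B : Type} [AddCommGroup C] [Module ℂ C] [Coalgebra ℂ C]
    [Ring B] [Algebra ℂ B] (f g : C →ₗ[ℂ] B) : C →ₗ[ℂ] B :=
  LinearMap.mul' ℂ B ∘ₗ TensorProduct.map f g ∘ₗ Coalgebra.comul

/-- A scalar-valued functional viewed as a map into `A`. -/
def toA {C : Type} [AddCommGroup C] [Module ℂ C] (f : C →ₗ[ℂ] ℂ) : C →ₗ[ℂ] A :=
  Algebra.linearMap ℂ A ∘ₗ f

/-- The twisted multiplication `a ·_σ b = τ(a₁,b₁) (a₂ ⋅ b₂) τ'(a₃,b₃)` associated with a pair of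
functionals `τ, τ'` on `A ⊗ A` and a multiplication map `m`. -/
def mulTwOf (m : A ⊗[ℂ] A →ₗ[ℂ] A) (τ τ' : A ⊗[ℂ] A →ₗ[ℂ] ℂ) : A ⊗[ℂ] A →ₗ[ℂ] A :=
  conv (toA A τ) (conv m (toA A τ'))

/-- Left-hand side of the 2-cocycle identity: `σ(b₁,c₁) σ(a, b₂c₂)` as a functional on
`A ⊗ (A ⊗ A)`. -/
def cocycleL (σ : A ⊗[ℂ] A →ₗ[ℂ] ℂ) : A ⊗[ℂ] (A ⊗[ℂ] A) →ₗ[ℂ] ℂ :=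
  conv (LinearMap.mul' ℂ ℂ ∘ₗ TensorProduct.map Coalgebra.counit σ)
    (σ ∘ₗ TensorProduct.map LinearMap.id (LinearMap.mul' ℂ A))

/-- Right-hand side of the 2-cocycle identity: `σ(a₁,b₁) σ(a₂b₂, c)` as a functional on
`A ⊗ (A ⊗ A)`. -/
def cocycleR (σ : A ⊗[ℂ] A →ₗ[ℂ] ℂ) : A ⊗[ℂ] (A ⊗[ℂ] A) →ₗ[ℂ] ℂ :=
  conv
    (LinearMap.mul' ℂ ℂ ∘ₗ TensorProduct.map σ Coalgebra.counit ∘ₗ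
      (TensorProduct.assoc ℂ A A A).symm.toLinearMap)
    (σ ∘ₗ TensorProduct.map (LinearMap.mul' ℂ A) LinearMap.id ∘ₗ
      (TensorProduct.assoc ℂ A A A).symm.toLinearMap)

/-- The 2-cocycle identity `σ(b₁,c₁) σ(a, b₂c₂) = σ(a₁,b₁) σ(a₂b₂, c)`. -/
def IsCocycle (σ : A ⊗[ℂ] A →ₗ[ℂ] ℂ) : Prop := cocycleL A σ = cocycleR A σ

/-- Normalization: `σ(a,1) = σ(1,a) = ε(a)`. -/
def IsNormalized (σ : A ⊗[ℂ] A →ₗ[ℂ] ℂ) : Prop :=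
  ∀ a : A, σ (a ⊗ₜ (1 : A)) = Coalgebra.counit a ∧ σ ((1 : A) ⊗ₜ a) = Coalgebra.counit a

/-- `σ` and `σinv` are convolution inverses of each other (the convolution unit on functionals on
the coalgebra `A ⊗ A` is its counit). -/
def AreConvInverse (σ σinv : A ⊗[ℂ] A →ₗ[ℂ] ℂ) : Prop :=
  conv σ σinv = (Coalgebra.counit : A ⊗[ℂ] A →ₗ[ℂ] ℂ) ∧
    conv σinv σ = (Coalgebra.counit : A ⊗[ℂ] A →ₗ[ℂ] ℂ)

variable (M : Type) [AddCommGroup M] [Module ℂ M]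
variable {I : Type} (d : I → ℕ)

/-- A counital coassociative coaction. -/
def IsCoactionOn (α : M →ₗ[ℂ] M ⊗[ℂ] A) : Prop :=
  (TensorProduct.map LinearMap.id Coalgebra.comul ∘ₗ α =
    (TensorProduct.assoc ℂ M A A).toLinearMap ∘ₗ TensorProduct.map α LinearMap.id ∘ₗ α) ∧
  ∀ x : M, (TensorProduct.rid ℂ M)
      ((TensorProduct.map LinearMap.id (Coalgebra.counit : A →ₗ[ℂ] ℂ)) (α x)) = x

/-- The maps `E^π_{sm} = (id ⊗ ρ^π_{sm}) ∘ α`. -/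
def Emap (α : M →ₗ[ℂ] M ⊗[ℂ] A) (ρf : ∀ π : I, Fin (d π) → Fin (d π) → (A →ₗ[ℂ] ℂ))
    (π : I) (s m' : Fin (d π)) : M →ₗ[ℂ] M :=
  (TensorProduct.rid ℂ M).toLinearMap ∘ₗ TensorProduct.map LinearMap.id (ρf π s m') ∘ₗ α

/-- The spectral projections `P_π = (id ⊗ ρ^π) ∘ α` with `ρ^π = ∑_s ρ^π_{ss}`. -/
def Pmap (α : M →ₗ[ℂ] M ⊗[ℂ] A) (ρf : ∀ π : I, Fin (d π) → Fin (d π) → (A →ₗ[ℂ] ℂ))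
    (π : I) : M →ₗ[ℂ] M :=
  (TensorProduct.rid ℂ M).toLinearMap ∘ₗ
    TensorProduct.map LinearMap.id (∑ s : Fin (d π), ρf π s s) ∘ₗ α

/-- The spectral subspace `M₀ = Span{P_π(x)}`. -/
def spectralSub (α : M →ₗ[ℂ] M ⊗[ℂ] A)
    (ρf : ∀ π : I, Fin (d π) → Fin (d π) → (A →ₗ[ℂ] ℂ)) : Submodule ℂ M :=
  Submodule.span ℂ {y : M | ∃ (π : I) (x : M), Pmap A M d α ρf π x = y}

/-- The matrix coefficients `q^π_{ij}` satisfy `Δ(q^π_{ij}) = ∑_s q^π_{is} ⊗ q^π_{sj}`. -/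
def IsMatrixCoeffs (q : ∀ π : I, Fin (d π) → Fin (d π) → A) : Prop :=
  ∀ (π : I) (i j : Fin (d π)),
    (Coalgebra.comul : A →ₗ[ℂ] A ⊗[ℂ] A) (q π i j) = ∑ s : Fin (d π), q π i s ⊗ₜ q π s j

/-- The functionals `ρ^π_{sm}` are dual to the matrix coefficients. -/
def IsDualFamily (q : ∀ π : I, Fin (d π) → Fin (d π) → A)
    (ρf : ∀ π : I, Fin (d π) → Fin (d π) → (A →ₗ[ℂ] ℂ)) : Prop :=
  (∀ (π : I) (s m' i j : Fin (d π)),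
      ρf π s m' (q π i j) = if i = s ∧ j = m' then 1 else 0) ∧
  (∀ (π π' : I), π ≠ π' → ∀ (s m' : Fin (d π)) (i j : Fin (d π')),
      ρf π s m' (q π' i j) = 0)

/-- `Q₀` is spanned by the matrix coefficients. -/
def SpansAll (q : ∀ π : I, Fin (d π) → Fin (d π) → A) : Prop :=
  Submodule.span ℂ
    (Set.range fun x : Σ π : I, Fin (d π) × Fin (d π) => q x.1 x.2.1 x.2.2) = ⊤

section Aux

variable {A' : Type} [Ring A'] [HopfAlgebra ℂ A']
variable {M' : Type} [AddCommGroup M'] [Module ℂ M']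

/-- `L f = (id ⊗ f) ∘ Δ : A → A`. -/
def Lmap (f : A' →ₗ[ℂ] ℂ) : A' →ₗ[ℂ] A' :=
  (TensorProduct.rid ℂ A').toLinearMap ∘ₗ TensorProduct.map LinearMap.id f ∘ₗ Coalgebra.comul

/-- `F f = (id ⊗ f) ∘ α : M → M`. -/
def Fap (α : M' →ₗ[ℂ] M' ⊗[ℂ] A') (f : A' →ₗ[ℂ] ℂ) : M' →ₗ[ℂ] M' :=
  (TensorProduct.rid ℂ M').toLinearMap ∘ₗ TensorProduct.map LinearMap.id f ∘ₗ α

lemma nat1 {P : Type} [AddCommGroup P] [Module ℂ P] (g : M' →ₗ[ℂ] P) (f : A' →ₗ[ℂ] ℂ)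
    (t : M' ⊗[ℂ] A') :
    g ((TensorProduct.rid ℂ M') (TensorProduct.map LinearMap.id f t)) =
      (TensorProduct.rid ℂ P) (TensorProduct.map LinearMap.id f
        (TensorProduct.map g LinearMap.id t)) := by
  induction t using TensorProduct.induction_on with
  | zero => simp
  | tmul m a => simp
  | add x y hx hy => simp [map_add, hx, hy]

lemma nat2 (f : A' →ₗ[ℂ] ℂ) (u : M' ⊗[ℂ] (A' ⊗[ℂ] A')) :
    (TensorProduct.rid ℂ (M' ⊗[ℂ] A')) (TensorProduct.map LinearMap.id f
        ((TensorProduct.assoc ℂ M' A' A').symm u)) =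
      TensorProduct.map LinearMap.id
        ((TensorProduct.rid ℂ A').toLinearMap ∘ₗ TensorProduct.map LinearMap.id f) u := by
  induction u using TensorProduct.induction_on with
  | zero => simp
  | tmul m w =>
    induction w using TensorProduct.induction_on with
    | zero => simp
    | tmul a b => simp [TensorProduct.smul_tmul']
    | add x y hx hy => simp [TensorProduct.tmul_add, map_add, hx, hy]
  | add x y hx hy => simp [map_add, hx, hy]

lemma nat3 (f : A' →ₗ[ℂ] ℂ) (b : A') (t : M' ⊗[ℂ] A') :
    ((TensorProduct.rid ℂ M') (TensorProduct.map LinearMap.id f t)) ⊗ₜ[ℂ] b =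
      TensorProduct.map LinearMap.id (f.smulRight b) t := by
  induction t using TensorProduct.induction_on with
  | zero => simp
  | tmul m a =>
    simp only [TensorProduct.map_tmul, LinearMap.id_coe, id_eq, LinearEquiv.coe_coe,
      TensorProduct.rid_tmul, LinearMap.smulRight_apply]
    exact TensorProduct.smul_tmul _ _ _
  | add x y hx hy => simp [TensorProduct.add_tmul, map_add, hx, hy]

lemma map_id_sum {ι : Type} (s : Finset ι) (F : ι → (A' →ₗ[ℂ] A')) (t : M' ⊗[ℂ] A') :
    TensorProduct.map LinearMap.id (∑ j ∈ s, F j) t =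
      ∑ j ∈ s, TensorProduct.map LinearMap.id (F j) t := by
  induction t using TensorProduct.induction_on with
  | zero => simp
  | tmul m a => simp [TensorProduct.tmul_sum]
  | add x y hx hy => simp [map_add, hx, hy, Finset.sum_add_distrib]

/-- Key naturality: `α ∘ (id ⊗ f) ∘ α = (id ⊗ L f) ∘ α`, from coassociativity. -/
lemma alpha_Fap (α : M' →ₗ[ℂ] M' ⊗[ℂ] A')
    (hα : IsCoactionOn A' M' α) (f : A' →ₗ[ℂ] ℂ) (x : M') :
    α (Fap α f x) = TensorProduct.map LinearMap.id (Lmap f) (α x) := by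
  have h1 : TensorProduct.map α LinearMap.id (α x) =
      (TensorProduct.assoc ℂ M' A' A').symm
        (TensorProduct.map LinearMap.id Coalgebra.comul (α x)) := by
    have h := LinearMap.congr_fun hα.1 x
    simp only [LinearMap.comp_apply, LinearEquiv.coe_coe] at h
    rw [h]
    simp
  have h2 : TensorProduct.map (LinearMap.id : M' →ₗ[ℂ] M')
        ((TensorProduct.rid ℂ A').toLinearMap ∘ₗ TensorProduct.map LinearMap.id f) ∘ₗ
        TensorProduct.map LinearMap.id (Coalgebra.comul : A' →ₗ[ℂ] A' ⊗[ℂ] A') =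
      TensorProduct.map LinearMap.id (Lmap f) := by
    rw [← TensorProduct.map_comp]
    simp [Lmap, LinearMap.comp_assoc]
  calc α (Fap α f x)
      = α ((TensorProduct.rid ℂ M') (TensorProduct.map LinearMap.id f (α x))) := rfl
    _ = (TensorProduct.rid ℂ (M' ⊗[ℂ] A')) (TensorProduct.map LinearMap.id f
          (TensorProduct.map α LinearMap.id (α x))) := nat1 α f (α x)
    _ = TensorProduct.map LinearMap.id
          ((TensorProduct.rid ℂ A').toLinearMap ∘ₗ TensorProduct.map LinearMap.id f)
          (TensorProduct.map LinearMap.id Coalgebra.comul (α x)) := by rw [h1, nat2]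
    _ = TensorProduct.map LinearMap.id (Lmap f) (α x) := by
          rw [← LinearMap.comp_apply, h2]

lemma Fap_Fap (α : M' →ₗ[ℂ] M' ⊗[ℂ] A') (hα : IsCoactionOn A' M' α)
    (f g : A' →ₗ[ℂ] ℂ) (x : M') :
    Fap α f (Fap α g x) = Fap α (f ∘ₗ Lmap g) x := by
  have : Fap α f (Fap α g x) = (TensorProduct.rid ℂ M')
      (TensorProduct.map LinearMap.id f
        (TensorProduct.map LinearMap.id (Lmap g) (α x))) := by
    simp only [Fap, LinearMap.comp_apply, LinearEquiv.coe_coe]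
    rw [← alpha_Fap α hα g x]
    rfl
  rw [this, ← LinearMap.comp_apply (TensorProduct.map LinearMap.id f),
    ← TensorProduct.map_comp]
  rfl

lemma map_id_comp_apply (f g : A' →ₗ[ℂ] A') (t : M' ⊗[ℂ] A') :
    TensorProduct.map LinearMap.id f (TensorProduct.map LinearMap.id g t) =
      TensorProduct.map LinearMap.id (f ∘ₗ g) t := by
  rw [← LinearMap.comp_apply, ← TensorProduct.map_comp, LinearMap.id_comp]

lemma Lmap_q {I : Type} {d : I → ℕ} (q : ∀ π : I, Fin (d π) → Fin (d π) → A')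
    (hq : IsMatrixCoeffs A' d q) (f : A' →ₗ[ℂ] ℂ) (π' : I) (i j : Fin (d π')) :
    Lmap f (q π' i j) = ∑ t : Fin (d π'), f (q π' t j) • q π' i t := by
  simp [Lmap, hq π' i j, map_sum]

lemma Lmap_rho_q {I : Type} {d : I → ℕ} (q : ∀ π : I, Fin (d π) → Fin (d π) → A')
    (ρf : ∀ π : I, Fin (d π) → Fin (d π) → (A' →ₗ[ℂ] ℂ))
    (hq : IsMatrixCoeffs A' d q) (hρ : IsDualFamily A' d q ρf)
    (π : I) (s m a b : Fin (d π)) :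
    Lmap (ρf π s m) (q π a b) = if b = m then q π a s else 0 := by
  rw [Lmap_q q hq]
  simp only [hρ.1]
  by_cases hb : b = m
  · simp [hb, ite_smul]
  · simp [hb]

lemma Lmap_rho_q_ne {I : Type} {d : I → ℕ} (q : ∀ π : I, Fin (d π) → Fin (d π) → A')
    (ρf : ∀ π : I, Fin (d π) → Fin (d π) → (A' →ₗ[ℂ] ℂ))
    (hq : IsMatrixCoeffs A' d q) (hρ : IsDualFamily A' d q ρf)
    {π π' : I} (h : π ≠ π') (s m : Fin (d π)) (a b : Fin (d π')) :
    Lmap (ρf π s m) (q π' a b) = 0 := by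
  rw [Lmap_q q hq]
  simp [hρ.2 π π' h]

lemma id1 {I : Type} {d : I → ℕ} (q : ∀ π : I, Fin (d π) → Fin (d π) → A')
    (ρf : ∀ π : I, Fin (d π) → Fin (d π) → (A' →ₗ[ℂ] ℂ))
    (hq : IsMatrixCoeffs A' d q) (hρ : IsDualFamily A' d q ρf) (hspan : SpansAll A' d q)
    (π : I) (hd : 0 < d π) (s : Fin (d π)) :
    Lmap (ρf π s ⟨0, hd⟩) ∘ₗ Lmap (ρf π ⟨0, hd⟩ ⟨0, hd⟩) =
      ∑ j : Fin (d π),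
        ((ρf π j ⟨0, hd⟩) ∘ₗ Lmap (ρf π ⟨0, hd⟩ ⟨0, hd⟩)).smulRight (q π j s) := by
  have hs : Submodule.span ℂ
      (Set.range fun x : Σ π : I, Fin (d π) × Fin (d π) => q x.1 x.2.1 x.2.2) = ⊤ := hspan
  apply LinearMap.ext_on hs
  rintro x ⟨⟨π', a, b⟩, rfl⟩
  simp only [LinearMap.comp_apply, LinearMap.sum_apply, LinearMap.smulRight_apply]
  rcases eq_or_ne π π' with h | h
  · subst h
    rw [Lmap_rho_q q ρf hq hρ]
    by_cases hb : b = (⟨0, hd⟩ : Fin (d π))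
    · simp only [hb, if_true]
      rw [Lmap_rho_q q ρf hq hρ]
      simp only [if_true, hρ.1]
      simp [ite_smul, Finset.sum_ite_eq, and_comm]
    · simp [hb]
  · rw [Lmap_rho_q_ne q ρf hq hρ h]
    simp

lemma id2 {I : Type} {d : I → ℕ} (q : ∀ π : I, Fin (d π) → Fin (d π) → A')
    (ρf : ∀ π : I, Fin (d π) → Fin (d π) → (A' →ₗ[ℂ] ℂ))
    (hq : IsMatrixCoeffs A' d q) (hρ : IsDualFamily A' d q ρf) (hspan : SpansAll A' d q)
    (π : I) (hd : 0 < d π) (j : Fin (d π)) :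
    ((∑ s : Fin (d π), ρf π s s) ∘ₗ Lmap (ρf π j ⟨0, hd⟩)) ∘ₗ Lmap (ρf π ⟨0, hd⟩ ⟨0, hd⟩) =
      (ρf π j ⟨0, hd⟩) ∘ₗ Lmap (ρf π ⟨0, hd⟩ ⟨0, hd⟩) := by
  have hs : Submodule.span ℂ
      (Set.range fun x : Σ π : I, Fin (d π) × Fin (d π) => q x.1 x.2.1 x.2.2) = ⊤ := hspan
  apply LinearMap.ext_on hs
  rintro x ⟨⟨π', a, b⟩, rfl⟩
  simp only [LinearMap.comp_apply, LinearMap.sum_apply]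
  rcases eq_or_ne π π' with h | h
  · subst h
    rw [Lmap_rho_q q ρf hq hρ]
    by_cases hb : b = (⟨0, hd⟩ : Fin (d π))
    · simp only [hb, if_true]
      rw [Lmap_rho_q q ρf hq hρ]
      simp only [if_true, hρ.1]
      by_cases haj : a = j
      · subst haj
        simp
      · simp [haj, fun s => show ¬(a = s ∧ j = s) from by
          rintro ⟨rfl, rfl⟩; exact haj rfl]
    · simp [hb]
  · rw [Lmap_rho_q_ne q ρf hq hρ h]
    simp

end Aux

/-- with `e_{πi1}` chosen in `M_{π1} = E^π_{11}(M)` and `e_{πis} := E^π_{s1}(e_{πi1})`,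
one has `α(e_{πis}) = ∑_j e_{πij} ⊗ q^π_{js}`; in particular `α` maps the spectral subalgebra
`M₀` into `M₀ ⊗_{alg} Q₀`. -/
theorem coaction_on_spectral_basis (α : M →ₗ[ℂ] M ⊗[ℂ] A)
    (q : ∀ π : I, Fin (d π) → Fin (d π) → A)
    (ρf : ∀ π : I, Fin (d π) → Fin (d π) → (A →ₗ[ℂ] ℂ))
    (hα : IsCoactionOn A M α) (hq : IsMatrixCoeffs A d q)
    (hρ : IsDualFamily A d q ρf) (hspan : SpansAll A d q)
    (π : I) (hd : 0 < d π) (e₁ : M)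
    (he₁ : e₁ ∈ Set.range (Emap A M d α ρf π ⟨0, hd⟩ ⟨0, hd⟩)) :
    (∀ s : Fin (d π),
      α (Emap A M d α ρf π s ⟨0, hd⟩ e₁) =
        ∑ j : Fin (d π), Emap A M d α ρf π j ⟨0, hd⟩ e₁ ⊗ₜ q π j s) ∧
    (∀ s : Fin (d π),
      α (Emap A M d α ρf π s ⟨0, hd⟩ e₁) ∈
        LinearMap.range (TensorProduct.map (spectralSub A M d α ρf).subtype
          (LinearMap.id : A →ₗ[ℂ] A))) := by
  obtain ⟨y, hy⟩ := he₁
  have hE : ∀ s m' : Fin (d π), Emap A M d α ρf π s m' = Fap α (ρf π s m') := fun _ _ => rfl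
  have key : ∀ s : Fin (d π),
      α (Emap A M d α ρf π s ⟨0, hd⟩ e₁) =
        ∑ j : Fin (d π), Emap A M d α ρf π j ⟨0, hd⟩ e₁ ⊗ₜ q π j s := by
    intro s
    have h1 : α (Emap A M d α ρf π s ⟨0, hd⟩ e₁) =
        TensorProduct.map LinearMap.id
          (Lmap (ρf π s ⟨0, hd⟩) ∘ₗ Lmap (ρf π ⟨0, hd⟩ ⟨0, hd⟩)) (α y) := by
      rw [hE, ← hy, hE, alpha_Fap α hα, alpha_Fap α hα, map_id_comp_apply]
    rw [h1, id1 q ρf hq hρ hspan π hd s, map_id_sum]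
    apply Finset.sum_congr rfl
    intro j _
    rw [← nat3]
    congr 1
    have h2 : (TensorProduct.rid ℂ M) (TensorProduct.map LinearMap.id
        ((ρf π j ⟨0, hd⟩) ∘ₗ Lmap (ρf π ⟨0, hd⟩ ⟨0, hd⟩)) (α y)) =
        Fap α ((ρf π j ⟨0, hd⟩) ∘ₗ Lmap (ρf π ⟨0, hd⟩ ⟨0, hd⟩)) y := rfl
    rw [h2, ← Fap_Fap α hα, ← hE, ← hE, hy]
  have mem : ∀ j : Fin (d π),
      Emap A M d α ρf π j ⟨0, hd⟩ e₁ ∈ spectralSub A M d α ρf := by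
    intro j
    have hPF : Pmap A M d α ρf π = Fap α (∑ s : Fin (d π), ρf π s s) := rfl
    have hP : Pmap A M d α ρf π (Emap A M d α ρf π j ⟨0, hd⟩ e₁) =
        Emap A M d α ρf π j ⟨0, hd⟩ e₁ := by
      rw [hPF, hE, ← hy, hE, Fap_Fap α hα, Fap_Fap α hα,
        id2 q ρf hq hρ hspan π hd j, ← Fap_Fap α hα]
    exact Submodule.subset_span ⟨π, _, hP⟩
  refine ⟨key, fun s => ?_⟩
  rw [key s]
  apply Submodule.sum_mem
  intro j _
  exact LinearMap.mem_range.2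
    ⟨(⟨Emap A M d α ρf π j ⟨0, hd⟩ e₁, mem j⟩ : spectralSub A M d α ρf) ⊗ₜ q π j s, by simp⟩

end CocycleTwist
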